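/- arXiv:1608.01445 — 2 statements merged into one kernel-verified Lean document; each statement's English description precedes it below -/
import Mathlib

section
/- Let k ≥ 1 and let G be a minimally k-matchable graph. Then every vertex of G has degree at most k, i.e., the maximum degree satisfies Δ(G) ≤ k. -/
open SimpleGraph

/-- `M` is a perfect matching of the graph `G`, viewed as a set of edges:
every vertex is an endvertex of exactly one member of `M`. -/
def IsPerfMatching {V : Type*} (G : SimpleGraph V) (M : Set (Sym2 V)) : Prop :=
  M ⊆ G.edgeSet ∧ ∀ v : V, ∃! e, e ∈ M ∧ v ∈ e

/-- The number of perfect matchings of `G`. -/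
noncomputable def numPM {V : Type*} (G : SimpleGraph V) : ℕ :=
  {M : Set (Sym2 V) | IsPerfMatching G M}.ncard

/-- `G` is `k`-matchable: it has at least `k` perfect matchings. -/
def Matchable {V : Type*} (k : ℕ) (G : SimpleGraph V) : Prop :=
  k ≤ numPM G

/-- `G` is minimally `k`-matchable. -/
def MinMatchable {V : Type*} (k : ℕ) (G : SimpleGraph V) : Prop :=
  Matchable k G ∧ ∀ e ∈ G.edgeSet, ¬ Matchable k (G.deleteEdges {e})

/-- `H` is an odd subdivision of `G`: every edge of `G` is replaced by a path of odd
length connecting its endvertices, all these paths pairwise internally disjoint. -/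
def IsOddSubdivisionOf {W V : Type*} (H : SimpleGraph W) (G : SimpleGraph V) : Prop :=
  ∃ (f : V ↪ W) (P : ∀ u v : V, G.Adj u v → H.Walk (f u) (f v)),
    (∀ u v (h : G.Adj u v), P v u h.symm = (P u v h).reverse) ∧
    (∀ u v (h : G.Adj u v), (P u v h).IsPath) ∧
    (∀ u v (h : G.Adj u v), Odd (P u v h).length) ∧
    (∀ u v (h : G.Adj u v), ∀ w ∈ (P u v h).support,
        (∃ x, w = f x) → w = f u ∨ w = f v) ∧
    (∀ u v (h : G.Adj u v) u' v' (h' : G.Adj u' v'), s(u, v) ≠ s(u', v') →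
        ∀ w, w ∈ (P u v h).support → w ∈ (P u' v' h').support → ∃ x, w = f x) ∧
    (∀ w : W, (∃ x, w = f x) ∨ ∃ (u v : _) (h : G.Adj u v), w ∈ (P u v h).support) ∧
    (∀ e ∈ H.edgeSet, ∃ (u v : _) (h : G.Adj u v), e ∈ (P u v h).edges)

/-- `G` is the disjoint union of an odd subdivision of `H` and any number (possibly zero)
of vertex-disjoint copies of `K₂`: there is a set `A` of vertices such that no edge of `G`
joins `A` to its complement, every vertex outside `A` has exactly one neighbour (these
vertices span the copies of `K₂`), and the subgraph induced on `A` is an odd subdivision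
of `H`. -/
def IsOddSubdivPlusK2 {W V : Type*} (H : SimpleGraph W) (G : SimpleGraph V) : Prop :=
  ∃ A : Set V,
    (∀ e ∈ G.edgeSet, (∀ v ∈ e, v ∈ A) ∨ (∀ v ∈ e, v ∉ A)) ∧
    (∀ v : V, v ∉ A → ∃! w, G.Adj v w) ∧
    IsOddSubdivisionOf (G.induce A) H

/-!
Every edge `e` of a minimally `k`-matchable graph lies in some perfect matching, since
otherwise `G - e` would keep all perfect matchings of `G`. If a vertex `x` had more than `k`
neighbours, fix one of them, `y₀`, and for every other neighbour `y` a perfect matching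
through `xy`. These matchings avoid `xy₀` and are pairwise distinct, as each matches `x` to a
different vertex, so `G - xy₀` would still have at least `k` perfect matchings.
-/

variable {V : Type*} {G : SimpleGraph V}

lemma IsPerfMatching.eq_of_mk_mem {M : Set (Sym2 V)} (hM : IsPerfMatching G M) {x y y' : V}
    (h : s(x, y) ∈ M) (h' : s(x, y') ∈ M) : y = y' :=
  Sym2.congr_right.mp ((hM.2 x).unique ⟨h, Sym2.mem_mk_left x y⟩ ⟨h', Sym2.mem_mk_left x y'⟩)

lemma isPerfMatching_deleteEdges_singleton_iff {M : Set (Sym2 V)} {e : Sym2 V} :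
    IsPerfMatching (G.deleteEdges {e}) M ↔ IsPerfMatching G M ∧ e ∉ M := by
  simp only [IsPerfMatching, edgeSet_deleteEdges, Set.subset_sdiff,
    Set.disjoint_singleton_right]
  tauto

lemma MinMatchable.exists_isPerfMatching_mem [Finite V] {k : ℕ} (hG : MinMatchable k G)
    {e : Sym2 V} (he : e ∈ G.edgeSet) : ∃ M, IsPerfMatching G M ∧ e ∈ M := by
  by_contra! h
  refine hG.2 e he (hG.1.trans (Set.ncard_le_ncard (fun M hM => ?_) (Set.toFinite _)))
  exact isPerfMatching_deleteEdges_singleton_iff.mpr ⟨hM, h M hM⟩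

lemma degree_sub_one_le_numPM_deleteEdges [Fintype V] [DecidableRel G.Adj] {x y₀ : V}
    (hx : ∀ y, G.Adj x y → ∃ M, IsPerfMatching G M ∧ s(x, y) ∈ M) (hy₀ : G.Adj x y₀) :
    G.degree x - 1 ≤ numPM (G.deleteEdges {s(x, y₀)}) := by
  classical
  choose! M hM using hx
  have hmaps : ∀ y ∈ ((G.neighborFinset x).erase y₀ : Set V),
      M y ∈ {M | IsPerfMatching (G.deleteEdges {s(x, y₀)}) M} := by
    intro y hy
    obtain ⟨hy, hne⟩ : G.Adj x y ∧ y ≠ y₀ := by simpa using hy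
    obtain ⟨hMy, hxy⟩ := hM y hy
    exact isPerfMatching_deleteEdges_singleton_iff.mpr
      ⟨hMy, fun hxy₀ => hne (hMy.eq_of_mk_mem hxy hxy₀)⟩
  have hinj : Set.InjOn M ((G.neighborFinset x).erase y₀ : Set V) := by
    intro y hy y' hy' hMyy'
    have hy : G.Adj x y := by simpa using (Finset.mem_of_mem_erase hy)
    have hy' : G.Adj x y' := by simpa using (Finset.mem_of_mem_erase hy')
    exact (hM y' hy').1.eq_of_mk_mem (hMyy' ▸ (hM y hy).2) (hM y' hy').2
  calc G.degree x - 1 = ((G.neighborFinset x).erase y₀ : Set V).ncard := by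
        rw [Set.ncard_coe_finset, Finset.card_erase_of_mem (by simpa using hy₀),
          card_neighborFinset_eq_degree]
    _ ≤ numPM (G.deleteEdges {s(x, y₀)}) :=
        Set.ncard_le_ncard_of_injOn M hmaps hinj (Set.toFinite _)

theorem degree_le_of_minMatchable_general (k : ℕ) {V : Type} [Fintype V]
    (G : SimpleGraph V) [DecidableRel G.Adj] (hG : MinMatchable k G) :
    (∀ x : V, G.degree x ≤ k) ∧ G.maxDegree ≤ k := by
  have hdeg : ∀ x : V, G.degree x ≤ k := by
    intro x
    by_contra! hx
    obtain ⟨y₀, hy₀⟩ := (G.degree_pos_iff_exists_adj x).mp (by omega)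
    have hcount := degree_sub_one_le_numPM_deleteEdges
      (fun y hy => hG.exists_isPerfMatching_mem hy) hy₀
    exact hG.2 s(x, y₀) hy₀ (by unfold Matchable; omega)
  exact ⟨hdeg, G.maxDegree_le_of_forall_degree_le k hdeg⟩

/-- **Lemma 1 (third part).** If `G` is minimally `k`-matchable, then every vertex of `G`
has degree at most `k`; in particular the maximum degree of `G` is at most `k`. -/
theorem degree_le_of_minMatchable (k : ℕ) (hk : 1 ≤ k) {V : Type} [Fintype V]
    (G : SimpleGraph V) [DecidableRel G.Adj] (hG : MinMatchable k G) :
    (∀ x : V, G.degree x ≤ k) ∧ G.maxDegree ≤ k :=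
  degree_le_of_minMatchable_general k G hG
end

section
/- Let k ≥ 1, let G be a minimally (k+1)-matchable graph, and let H be a spanning subgraph of G that is minimally k-matchable. Then every perfect matching of G contains either all edges of E(G) \ E(H) or none of them; in other words, no perfect matching of G contains at least one but not all edges of E(G) \ E(H). -/
open SimpleGraph

namespace IsPerfMatching

variable {V : Type*} {G G' : SimpleGraph V} {M : Set (Sym2 V)}

theorem mono (hM : IsPerfMatching G M) (h : G ≤ G') : IsPerfMatching G' M :=
  ⟨hM.1.trans (edgeSet_mono h), hM.2⟩

theorem deleteEdges (hM : IsPerfMatching G M) {s : Set (Sym2 V)} (hs : Disjoint M s) :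
    IsPerfMatching (G.deleteEdges s) M :=
  ⟨by rw [edgeSet_deleteEdges]; exact Set.subset_sdiff.2 ⟨hM.1, hs⟩, hM.2⟩

end IsPerfMatching

section

variable {V : Type*} {G H : SimpleGraph V} {k : ℕ}

theorem Matchable.finite_setOf_isPerfMatching (hG : Matchable (k + 1) G) :
    {M | IsPerfMatching G M}.Finite :=
  Set.finite_of_ncard_pos (k.succ_pos.trans_le hG)

theorem MinMatchable.numPM_deleteEdges_le (hG : MinMatchable (k + 1) G) {e : Sym2 V}
    (he : e ∈ G.edgeSet) : numPM (G.deleteEdges {e}) ≤ k :=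
  Nat.lt_succ_iff.mp (not_le.mp (hG.2 e he))

/-- `𝔐(H) ⊆ 𝔐(G - d)` and `|𝔐(G - d)| ≤ k ≤ |𝔐(H)|`, so `𝔐(G - d) = 𝔐(H)`. Finiteness of
`𝔐(G - d) ⊆ 𝔐(G)` matters, as `ncard` of an infinite set is `0`. -/
theorem MinMatchable.isPerfMatching_of_notMem (hHG : H ≤ G) (hG : MinMatchable (k + 1) G)
    (hH : Matchable k H) {d : Sym2 V} (hd : d ∈ G.edgeSet \ H.edgeSet) {M : Set (Sym2 V)}
    (hM : IsPerfMatching G M) (hdM : d ∉ M) : IsPerfMatching H M := by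
  have hsub : {N | IsPerfMatching H N} ⊆ {N | IsPerfMatching (G.deleteEdges {d}) N} :=
    fun N hN ↦ (hN.mono hHG).deleteEdges
      (Set.disjoint_singleton_right.2 fun hdN ↦ hd.2 (hN.1 hdN))
  have hfin : {N | IsPerfMatching (G.deleteEdges {d}) N}.Finite :=
    hG.1.finite_setOf_isPerfMatching.subset fun N hN ↦ hN.mono (G.deleteEdges_le {d})
  have heq := Set.eq_of_subset_of_ncard_le hsub
    ((hG.numPM_deleteEdges_le hd.1).trans hH) hfin
  exact (Set.ext_iff.1 heq M).2 (hM.deleteEdges (Set.disjoint_singleton_right.2 hdM))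

end

theorem all_or_none_new_edges_general (k : ℕ) {V : Type}
    (G H : SimpleGraph V) (hHG : H ≤ G)
    (hG : MinMatchable (k + 1) G) (hH : MinMatchable k H) :
    ∀ M : Set (Sym2 V), IsPerfMatching G M →
      (G.edgeSet \ H.edgeSet ⊆ M) ∨ (∀ e ∈ G.edgeSet \ H.edgeSet, e ∉ M) := by
  intro M hM
  refine or_iff_not_imp_left.2 fun hnot ↦ ?_
  obtain ⟨d, hd, hdM⟩ := Set.not_subset.1 hnot
  have hMH := hG.isPerfMatching_of_notMem hHG hH.1 hd hM hdM
  exact fun e he heM ↦ he.2 (hMH.1 heM)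

/-- **Claim 1 (third part).** Let `G` be minimally `(k+1)`-matchable and `H` a spanning
minimally `k`-matchable subgraph of `G`. Then every perfect matching of `G` contains either
all edges of `E(G) \ E(H)` or none of them. -/
theorem all_or_none_new_edges (k : ℕ) (hk : 1 ≤ k) {V : Type} [Fintype V]
    (G H : SimpleGraph V) (hHG : H ≤ G)
    (hG : MinMatchable (k + 1) G) (hH : MinMatchable k H) :
    ∀ M : Set (Sym2 V), IsPerfMatching G M →
      (G.edgeSet \ H.edgeSet ⊆ M) ∨ (∀ e ∈ G.edgeSet \ H.edgeSet, e ∉ M) :=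
  all_or_none_new_edges_general k G H hHG hG hH
end
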